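/- arXiv:2303.00464 — 3 statements merged into one kernel-verified Lean document; each statement's English description precedes it below -/
import Mathlib

section
/- If a : ℤ → ℝ is a non-negative sequence in ℓ¹(ℤ), then for every λ > 0, the cardinality of {m ∈ ℤ : M'a(m) > 4λ} is at most 3 times the cardinality of {m ∈ ℤ : M_d a(m) > λ}, where M' is the centered maximal operator and M_d is the dyadic maximal operator. -/
/-!
Call a dyadic interval heavy if its average exceeds `λ`; heavy intervals lie in
`E = {M_d a > λ}`. We may assume `E` finite. Then every heavy interval lies in a maximal
one, and distinct maximal heavy intervals are disjoint since dyadic intervals are nested or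
disjoint. A centred interval of radius `r` with average `> 4λ` lies in two adjacent dyadic
intervals of length `2^N ∈ (2r, 4r]`, and one of them must be heavy; so `{M' a > 4λ}` is
covered by the tripled intervals `3J` of the maximal heavy `J`, whence
`#{M' a > 4λ} ≤ ∑ 3 #J ≤ 3 #E`.
-/

open scoped ENNReal BigOperators

/-- Average of `|a|` over a finite set of integers, valued in `ℝ≥0∞`. -/
noncomputable def eavg (a : ℤ → ℝ) (I : Finset ℤ) : ℝ≥0∞ :=
  (∑ n ∈ I, ENNReal.ofReal |a n|) / (I.card : ℝ≥0∞)

/-- Centered Hardy–Littlewood maximal operator on ℤ. -/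
noncomputable def Mc (a : ℤ → ℝ) (m : ℤ) : ℝ≥0∞ :=
  ⨆ (r : ℕ) (_ : 1 ≤ r), eavg a (Finset.Icc (m - r) (m + r))

/-- Dyadic Hardy–Littlewood maximal operator on ℤ: supremum of averages over dyadic
intervals `[(j-1)2^N + 1, j 2^N]`, `N ≥ 1`, containing `m`. -/
noncomputable def Md (a : ℤ → ℝ) (m : ℤ) : ℝ≥0∞ :=
  ⨆ (N : ℕ) (_ : 1 ≤ N) (j : ℤ) (_ : m ∈ Finset.Icc ((j - 1) * 2 ^ N + 1) (j * 2 ^ N)),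
    eavg a (Finset.Icc ((j - 1) * 2 ^ N + 1) (j * 2 ^ N))

open Finset
open scoped Pointwise

noncomputable def dyadicInterval (N : ℕ) (j : ℤ) : Finset ℤ :=
  Icc ((j - 1) * 2 ^ N + 1) (j * 2 ^ N)

def IsDyadic (I : Finset ℤ) : Prop := ∃ N, 1 ≤ N ∧ ∃ j, dyadicInterval N j = I

/-- For an interval `I` this is the interval `3I` with the same centre and three times the
length. -/
noncomputable def triple (I : Finset ℤ) : Finset ℤ := I + Icc (-(#I : ℤ)) #I

section DyadicInterval

variable {N : ℕ} {j x : ℤ}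

lemma mem_dyadicInterval :
    x ∈ dyadicInterval N j ↔ (j - 1) * 2 ^ N + 1 ≤ x ∧ x ≤ j * 2 ^ N :=
  mem_Icc

lemma card_dyadicInterval (N : ℕ) (j : ℤ) : #(dyadicInterval N j) = 2 ^ N := by
  rw [dyadicInterval, Int.card_Icc]
  have h : j * 2 ^ N + 1 - ((j - 1) * 2 ^ N + 1) = ((2 ^ N : ℕ) : ℤ) := by push_cast; ring
  rw [h, Int.toNat_natCast]

lemma dyadicInterval_nonempty (N : ℕ) (j : ℤ) : (dyadicInterval N j).Nonempty := by
  rw [← card_pos, card_dyadicInterval]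
  positivity

lemma mem_dyadicInterval_iff_ediv : x ∈ dyadicInterval N j ↔ (x - 1) / 2 ^ N = j - 1 := by
  rw [mem_dyadicInterval, Int.ediv_eq_iff_of_pos (by positivity)]
  constructor <;> rintro ⟨h₁, h₂⟩ <;> constructor <;> linarith

lemma mem_dyadicInterval_ediv_add_one (N : ℕ) (x : ℤ) :
    x ∈ dyadicInterval N ((x - 1) / 2 ^ N + 1) := by
  rw [mem_dyadicInterval_iff_ediv, add_sub_cancel_right]

lemma mem_dyadicInterval_add_one_iff :
    x ∈ dyadicInterval N (j + 1) ↔ x - 2 ^ N ∈ dyadicInterval N j := by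
  simp only [mem_dyadicInterval]
  constructor <;> rintro ⟨h₁, h₂⟩ <;> constructor <;> linarith

lemma dyadicInterval_union_add_one (N : ℕ) (j : ℤ) :
    dyadicInterval N j ∪ dyadicInterval N (j + 1) =
      Icc ((j - 1) * 2 ^ N + 1) ((j + 1) * 2 ^ N) := by
  ext x
  simp only [mem_union, mem_dyadicInterval, mem_Icc]
  constructor
  · rintro (⟨h₁, h₂⟩ | ⟨h₁, h₂⟩) <;> constructor <;> nlinarith [pow_pos (two_pos (α := ℤ)) N]
  · rintro ⟨h₁, h₂⟩
    rcases le_or_gt x (j * 2 ^ N) with h | h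
    · exact Or.inl ⟨h₁, h⟩
    · exact Or.inr ⟨by linarith, h₂⟩

lemma dyadicInterval_subset_of_mem {N₁ N₂ : ℕ} {j₁ j₂ : ℤ} (hN : N₁ ≤ N₂)
    (h₁ : x ∈ dyadicInterval N₁ j₁) (h₂ : x ∈ dyadicInterval N₂ j₂) :
    dyadicInterval N₁ j₁ ⊆ dyadicInterval N₂ j₂ := by
  have hdiv : ∀ y : ℤ, (y - 1) / 2 ^ N₂ = (y - 1) / 2 ^ N₁ / 2 ^ (N₂ - N₁) := fun y => by
    rw [Int.ediv_ediv_of_nonneg (by positivity), ← pow_add, Nat.add_sub_cancel' hN]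
  intro y hy
  rw [mem_dyadicInterval_iff_ediv] at h₁ h₂ hy ⊢
  rw [hdiv, hy, ← h₁, ← hdiv, h₂]

lemma exists_Icc_subset_dyadicInterval_union {lo hi : ℤ} (h : hi - lo < 2 ^ N) :
    ∃ j, Icc lo hi ⊆ dyadicInterval N j ∪ dyadicInterval N (j + 1) := by
  have hlo := mem_dyadicInterval.1 (mem_dyadicInterval_ediv_add_one N lo)
  refine ⟨(lo - 1) / 2 ^ N + 1, ?_⟩
  rw [dyadicInterval_union_add_one]
  exact Icc_subset_Icc hlo.1 (by linarith [hlo.2])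

end DyadicInterval

lemma mem_triple_of_mem {I : Finset ℤ} {m x : ℤ} (hx : x ∈ I) (h : |m - x| ≤ #I) :
    m ∈ triple I :=
  mem_add.2 ⟨x, hx, m - x, mem_Icc.2 (abs_le.1 h), add_sub_cancel _ _⟩

lemma mem_triple_of_mem_union_add_one {N : ℕ} {j m : ℤ}
    (hm : m ∈ dyadicInterval N j ∪ dyadicInterval N (j + 1)) :
    m ∈ triple (dyadicInterval N j) ∧ m ∈ triple (dyadicInterval N (j + 1)) := by
  have hlen : ∀ k, |(2 : ℤ) ^ N| ≤ #(dyadicInterval N k) := fun k => by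
    rw [card_dyadicInterval, abs_of_pos (by positivity)]; push_cast; rfl
  rcases mem_union.1 hm with hm | hm
  · refine ⟨mem_triple_of_mem hm (by simp), mem_triple_of_mem (x := m + 2 ^ N) ?_ ?_⟩
    · rwa [mem_dyadicInterval_add_one_iff, add_sub_cancel_right]
    · rw [sub_add_cancel_left, abs_neg]; exact hlen _
  · refine ⟨mem_triple_of_mem (x := m - 2 ^ N) (mem_dyadicInterval_add_one_iff.1 hm) ?_,
      mem_triple_of_mem hm (by simp)⟩
    rw [sub_sub_cancel]; exact hlen _

lemma triple_mono {I J : Finset ℤ} (h : I ⊆ J) : triple I ⊆ triple J :=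
  add_subset_add h (Icc_subset_Icc (by simpa using card_le_card h) (by simpa using card_le_card h))

lemma IsDyadic.card_triple_le {I : Finset ℤ} (hI : IsDyadic I) : #(triple I) ≤ 3 * #I := by
  obtain ⟨N, -, j, rfl⟩ := hI
  calc #(triple (dyadicInterval N j))
      ≤ #(Icc ((j - 1) * 2 ^ N + 1 + -2 ^ N) (j * 2 ^ N + 2 ^ N)) := by
        refine card_le_card ?_
        rw [triple, card_dyadicInterval]
        push_cast
        exact Icc_add_Icc_subset _ _ _ _
    _ = 3 * #(dyadicInterval N j) := by
        rw [Int.card_Icc, card_dyadicInterval]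
        have h : j * 2 ^ N + 2 ^ N + 1 - ((j - 1) * 2 ^ N + 1 + -2 ^ N) =
            ((3 * 2 ^ N : ℕ) : ℤ) := by push_cast; ring
        rw [h, Int.toNat_natCast]

lemma IsDyadic.subset_or_subset {I J : Finset ℤ} (hI : IsDyadic I) (hJ : IsDyadic J)
    (h : ¬Disjoint I J) : I ⊆ J ∨ J ⊆ I := by
  obtain ⟨N₁, -, j₁, rfl⟩ := hI
  obtain ⟨N₂, -, j₂, rfl⟩ := hJ
  obtain ⟨x, hx₁, hx₂⟩ := not_disjoint_iff.1 h
  rcases le_total N₁ N₂ with hN | hN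
  · exact Or.inl (dyadicInterval_subset_of_mem hN hx₁ hx₂)
  · exact Or.inr (dyadicInterval_subset_of_mem hN hx₂ hx₁)

lemma pairwiseDisjoint_setOf_maximal {P : Finset ℤ → Prop} (hP : ∀ I, P I → IsDyadic I) :
    {I | Maximal P I}.PairwiseDisjoint id := by
  intro I hI J hJ hIJ
  by_contra h
  rcases (hP I hI.prop).subset_or_subset (hP J hJ.prop) h with hsub | hsub
  · exact hIJ (hI.eq_of_le hJ.prop hsub)
  · exact hIJ (hJ.eq_of_le hI.prop hsub).symm

lemma card_biUnion_triple_le {𝓜 : Finset (Finset ℤ)} (hd : ∀ I ∈ 𝓜, IsDyadic I)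
    (hdisj : (𝓜 : Set (Finset ℤ)).PairwiseDisjoint id) :
    #(𝓜.biUnion triple) ≤ 3 * #(𝓜.biUnion id) :=
  calc #(𝓜.biUnion triple) ≤ ∑ I ∈ 𝓜, #(triple I) := card_biUnion_le
    _ ≤ ∑ I ∈ 𝓜, 3 * #I := sum_le_sum fun I hI => (hd I hI).card_triple_le
    _ = 3 * #(𝓜.biUnion id) := by rw [← mul_sum, card_biUnion hdisj]; rfl

lemma lt_mul_card_or_lt_mul_card_of_subset_union {α : Type*} [DecidableEq α] {f : α → ℝ≥0∞}
    {I J K : Finset α} {c : ℕ} {lam : ℝ≥0∞} (hsub : I ⊆ J ∪ K) (hcard : #J + #K ≤ c * #I)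
    (h : c * lam * #I < ∑ n ∈ I, f n) :
    lam * #J < ∑ n ∈ J, f n ∨ lam * #K < ∑ n ∈ K, f n := by
  by_contra! hle
  have hcard' : ((#J + #K : ℕ) : ℝ≥0∞) ≤ c * #I := by exact_mod_cast hcard
  refine h.not_ge ?_
  calc ∑ n ∈ I, f n ≤ ∑ n ∈ J ∪ K, f n := sum_le_sum_of_subset hsub
    _ ≤ ∑ n ∈ J, f n + ∑ n ∈ K, f n := by rw [← sum_union_inter]; exact le_self_add
    _ ≤ lam * #J + lam * #K := add_le_add hle.1 hle.2
    _ = lam * ((#J + #K : ℕ) : ℝ≥0∞) := by push_cast; ring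
    _ ≤ c * lam * #I := by rw [mul_assoc, mul_left_comm]; gcongr

lemma exists_lt_two_pow_le_two_mul {n : ℕ} (hn : n ≠ 0) : ∃ N, 1 ≤ N ∧ n < 2 ^ N ∧ 2 ^ N ≤ 2 * n :=
  ⟨Nat.log 2 n + 1, le_add_self, Nat.lt_pow_succ_log_self one_lt_two n,
    by rw [pow_succ, mul_comm]; exact Nat.mul_le_mul_left 2 (Nat.pow_log_le_self 2 hn)⟩

section Averages

variable {a : ℤ → ℝ} {lam : ℝ≥0∞}

lemma lt_eavg_iff {I : Finset ℤ} (hI : I.Nonempty) :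
    lam < eavg a I ↔ lam * #I < ∑ n ∈ I, ENNReal.ofReal |a n| :=
  ENNReal.lt_div_iff_mul_lt (Or.inl (by simpa using hI.ne_empty)) (Or.inl (ENNReal.natCast_ne_top _))

lemma lt_Md_of_mem {I : Finset ℤ} {m : ℤ} (hI : IsDyadic I)
    (h : lam < eavg a I) (hm : m ∈ I) : lam < Md a m := by
  obtain ⟨N, hN, j, rfl⟩ := hI
  exact h.trans_le (le_iSup₂_of_le N hN (le_iSup₂_of_le j hm le_rfl))

lemma exists_isDyadic_lt_eavg_of_lt_Mc {m : ℤ} (h : 4 * lam < Mc a m) :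
    ∃ I, (IsDyadic I ∧ lam < eavg a I) ∧ m ∈ triple I := by
  simp only [Mc, lt_iSup_iff] at h
  obtain ⟨r, hr, havg⟩ := h
  obtain ⟨N, hN, hlt, hle⟩ := exists_lt_two_pow_le_two_mul (n := 2 * r) (by omega)
  have hltZ : (2 * r : ℤ) < 2 ^ N := by exact_mod_cast hlt
  obtain ⟨j, hsub⟩ := exists_Icc_subset_dyadicInterval_union (N := N) (lo := m - r) (hi := m + r)
    (by linarith)
  have hcard : #(Icc (m - r) (m + r)) = 2 * r + 1 := by
    rw [Int.card_Icc]; omega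
  have hcard' :
      #(dyadicInterval N j) + #(dyadicInterval N (j + 1)) ≤ 4 * #(Icc (m - r) (m + r)) := by
    rw [card_dyadicInterval, card_dyadicInterval, hcard]; omega
  have hmI : m ∈ Icc (m - r) (m + r) := mem_Icc.2 ⟨by omega, by omega⟩
  have hm := mem_triple_of_mem_union_add_one (hsub hmI)
  rw [lt_eavg_iff ⟨m, hmI⟩] at havg
  rcases lt_mul_card_or_lt_mul_card_of_subset_union hsub hcard' (by exact_mod_cast havg) with h | h
  · exact ⟨_, ⟨⟨N, hN, j, rfl⟩, (lt_eavg_iff (dyadicInterval_nonempty N j)).2 h⟩, hm.1⟩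
  · exact ⟨_, ⟨⟨N, hN, j + 1, rfl⟩, (lt_eavg_iff (dyadicInterval_nonempty N _)).2 h⟩, hm.2⟩

end Averages

theorem card_centered_gt_le_three_card_dyadic_gt_general
    (a : ℤ → ℝ) (lam : ℝ≥0∞) :
    {m : ℤ | 4 * lam < Mc a m}.encard ≤ 3 * {m : ℤ | lam < Md a m}.encard := by
  classical
  obtain hE | hE := {m : ℤ | lam < Md a m}.finite_or_infinite
  swap
  · simp [hE.encard_eq]
  let F := hE.toFinset
  let 𝓗 : Set (Finset ℤ) := {I | IsDyadic I ∧ lam < eavg a I}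
  have hsubF : ∀ I ∈ 𝓗, I ⊆ F := fun I hI m hm => hE.mem_toFinset.2 (lt_Md_of_mem hI.1 hI.2 hm)
  have h𝓗 : 𝓗.Finite := F.powerset.finite_toSet.subset fun I hI => mem_powerset.2 (hsubF I hI)
  have h𝓜 : {I | Maximal (· ∈ 𝓗) I}.Finite := h𝓗.subset fun I hI => hI.prop
  let 𝓜 := h𝓜.toFinset
  have hcover : {m | 4 * lam < Mc a m} ⊆ ↑(𝓜.biUnion triple) := by
    intro m hm
    obtain ⟨I, hI, hIm⟩ := exists_isDyadic_lt_eavg_of_lt_Mc hm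
    obtain ⟨J, hIJ, hJ⟩ := h𝓗.exists_le_maximal hI
    exact mem_biUnion.2 ⟨J, h𝓜.mem_toFinset.2 hJ, triple_mono hIJ hIm⟩
  have hdisj : (𝓜 : Set (Finset ℤ)).PairwiseDisjoint id := by
    rw [h𝓜.coe_toFinset]; exact pairwiseDisjoint_setOf_maximal fun I hI => hI.1
  have hunion : 𝓜.biUnion id ⊆ F :=
    biUnion_subset.2 fun I hI => hsubF I (h𝓜.mem_toFinset.1 hI).prop
  calc {m | 4 * lam < Mc a m}.encard ≤ #(𝓜.biUnion triple) :=
        (Set.encard_le_encard hcover).trans (Set.encard_coe_eq_coe_finsetCard _).le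
    _ ≤ 3 * #F := by
        exact_mod_cast (card_biUnion_triple_le (fun I hI => (h𝓜.mem_toFinset.1 hI).prop.1)
          hdisj).trans (Nat.mul_le_mul_left 3 (card_le_card hunion))
    _ = 3 * {m : ℤ | lam < Md a m}.encard := by rw [hE.encard_eq_coe_toFinset_card]

/-- for a non-negative summable sequence,
`#{M' a > 4λ} ≤ 3 · #{M_d a > λ}`. -/
theorem card_centered_gt_le_three_card_dyadic_gt
    (a : ℤ → ℝ) (ha : ∀ n, 0 ≤ a n) (hsum : Summable a)
    (lam : ℝ≥0∞) (hlam : 0 < lam) :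
    {m : ℤ | 4 * lam < Mc a m}.encard ≤ 3 * {m : ℤ | lam < Md a m}.encard :=
  card_centered_gt_le_three_card_dyadic_gt_general a lam
end

section
/- If w : ℤ → ℝ≥0 and a : ℤ → ℝ is a sequence in ℓ¹(ℤ), then there is a constant C₁ (depending only on the dimension-free constants of the construction) such that for every λ > 0, ∑_{{m : Ma(m) > λ}} w(m) ≤ (C₁/λ) ∑_{m∈ℤ} |a(m)| Mw(m), where M is the Hardy-Littlewood maximal operator on ℤ. -/
/-!
Vitali covering on `ℤ`: from finitely many intervals `I` with average of `|a|` above `λ`, pick a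
disjoint subfamily whose five-fold enlargements `5I` cover them. On each chosen `I`,
`λ · w(5I) ≤ λ |5I| · avg_{5I} w ≤ 5 λ |I| · avg_{5I} w ≤ 5 ∑_{n ∈ I} |a n| · Mw(n)`, because
`λ |I| ≤ ∑_I |a|` and `avg_{5I} w ≤ Mw(n)` for every `n ∈ I ⊆ 5I`. Disjointness of the chosen
intervals lets these bounds add up to `5 ∑_n |a n| Mw(n)`.
-/

open scoped ENNReal BigOperators NNReal

/-- Uncentered Hardy–Littlewood maximal operator over finite intervals of ℤ. -/
noncomputable def Mhl (a : ℤ → ℝ) (m : ℤ) : ℝ≥0∞ :=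
  ⨆ (i : ℤ) (j : ℤ) (_ : m ∈ Finset.Icc i j), eavg a (Finset.Icc i j)

open Finset

theorem Finset.sum_biUnion_le_sum_sum {α ι M : Type*} [DecidableEq α] [AddCommMonoid M]
    [PartialOrder M] [IsOrderedAddMonoid M] [CanonicallyOrderedAdd M]
    (T : Finset ι) (t : ι → Finset α) (f : α → M) :
    ∑ x ∈ T.biUnion t, f x ≤ ∑ i ∈ T, ∑ x ∈ t i, f x := by
  rw [← sup_eq_biUnion]
  exact apply_sup_le_sum (f := fun s => ∑ x ∈ s, f x) sum_empty
    (le_self_add.trans_eq sum_union_inter) T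

noncomputable def fiveFoldIcc (i j : ℤ) : Finset ℤ := Icc (i - 2 * (j - i)) (j + 2 * (j - i))

theorem Icc_subset_fiveFoldIcc {i j : ℤ} (h : i ≤ j) : Icc i j ⊆ fiveFoldIcc i j :=
  Icc_subset_Icc (by omega) (by omega)

theorem card_fiveFoldIcc_le (i j : ℤ) : #(fiveFoldIcc i j) ≤ 5 * #(Icc i j) := by
  simp only [fiveFoldIcc, Int.card_Icc]
  omega

theorem exists_pairwiseDisjoint_Icc_subset_fiveFoldIcc (S : Finset (ℤ × ℤ))
    (hS : ∀ p ∈ S, p.1 ≤ p.2) :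
    ∃ T ⊆ S, (T : Set (ℤ × ℤ)).PairwiseDisjoint (fun q => Icc q.1 q.2) ∧
      ∀ p ∈ S, ∃ q ∈ T, Icc p.1 p.2 ⊆ fiveFoldIcc q.1 q.2 := by
  obtain ⟨R, hR⟩ := (S.finite_toSet.image fun p => ((p.2 - p.1 : ℤ) : ℝ)).bddAbove
  obtain ⟨u, huS, hudisj, hucov⟩ := Vitali.exists_disjoint_subfamily_covering_enlargement
    (fun p : ℤ × ℤ => (Icc p.1 p.2 : Set ℤ)) S (fun p => ((p.2 - p.1 : ℤ) : ℝ)) 2 one_lt_two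
    (fun p hp => by simpa using hS p hp) R (fun p hp => hR ⟨p, hp, rfl⟩)
    (fun p hp => by simpa using hS p hp)
  obtain ⟨T, rfl⟩ := (S.finite_toSet.subset huS).exists_finset_coe
  refine ⟨T, coe_subset.mp huS, fun p hp q hq hpq => disjoint_coe.mp (hudisj hp hq hpq),
    fun p hp => ?_⟩
  obtain ⟨q, hq, ⟨x, hxp, hxq⟩, hlen⟩ := hucov p hp
  have hlen' : p.2 - p.1 ≤ 2 * (q.2 - q.1) := by exact_mod_cast hlen
  simp only [coe_Icc, Set.mem_Icc] at hxp hxq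
  refine ⟨q, hq, fun y hy => ?_⟩
  simp only [fiveFoldIcc, mem_Icc] at hy ⊢
  omega

theorem eavg_le_Mhl {a : ℤ → ℝ} {i j m : ℤ} (hm : m ∈ Icc i j) :
    eavg a (Icc i j) ≤ Mhl a m :=
  le_iSup₂_of_le i j (le_iSup (fun _ => eavg a (Icc i j)) hm)

theorem exists_Icc_of_lt_Mhl {a : ℤ → ℝ} {m : ℤ} {lam : ℝ≥0∞} (h : lam < Mhl a m) :
    ∃ i j, m ∈ Icc i j ∧ lam < eavg a (Icc i j) := by
  simpa only [Mhl, lt_iSup_iff, exists_prop] using h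

theorem mul_sum_le_of_le_eavg {a w : ℤ → ℝ} {I : Finset ℤ} {i j : ℤ} {K lam : ℝ≥0∞}
    (hI : I ⊆ Icc i j) (hcard : (#(Icc i j) : ℝ≥0∞) ≤ K * #I) (hlam : lam ≤ eavg a I) :
    lam * ∑ m ∈ Icc i j, ENNReal.ofReal |w m| ≤
      K * ∑ n ∈ I, ENNReal.ofReal |a n| * Mhl w n := by
  rcases (Icc i j).eq_empty_or_nonempty with hJ | hJ
  · simp [hJ]
  have hJsum : ∑ m ∈ Icc i j, ENNReal.ofReal |w m| = eavg w (Icc i j) * #(Icc i j) :=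
    (ENNReal.div_mul_cancel (by simpa using hJ.card_pos.ne') (ENNReal.natCast_ne_top _)).symm
  have hmass : lam * #I ≤ ∑ n ∈ I, ENNReal.ofReal |a n| := ENNReal.mul_le_of_le_div hlam
  calc lam * ∑ m ∈ Icc i j, ENNReal.ofReal |w m|
      = lam * eavg w (Icc i j) * #(Icc i j) := by rw [hJsum, mul_assoc]
    _ ≤ lam * eavg w (Icc i j) * (K * #I) := by gcongr
    _ = K * (lam * #I * eavg w (Icc i j)) := by ring
    _ ≤ K * ((∑ n ∈ I, ENNReal.ofReal |a n|) * eavg w (Icc i j)) := by gcongr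
    _ ≤ K * ∑ n ∈ I, ENNReal.ofReal |a n| * Mhl w n := by
      rw [sum_mul]
      gcongr with n hn
      exact eavg_le_Mhl (hI hn)

theorem mul_sum_le_of_forall_lt_Mhl {a w : ℤ → ℝ} {lam : ℝ≥0∞} {F : Finset ℤ}
    (hF : ∀ m ∈ F, lam < Mhl a m) :
    lam * ∑ m ∈ F, ENNReal.ofReal |w m| ≤ 5 * ∑' n, ENNReal.ofReal |a n| * Mhl w n := by
  classical
  choose! i j hij using fun m hm => exists_Icc_of_lt_Mhl (hF m hm)
  have hle : ∀ m ∈ F, i m ≤ j m := fun m hm =>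
    (mem_Icc.mp (hij m hm).1).1.trans (mem_Icc.mp (hij m hm).1).2
  obtain ⟨T, hTS, hTdisj, hTcov⟩ := exists_pairwiseDisjoint_Icc_subset_fiveFoldIcc
    (F.image fun m => (i m, j m)) (by simpa using hle)
  have hcover : ∀ m ∈ F, ∃ q ∈ T, m ∈ fiveFoldIcc q.1 q.2 := fun m hm =>
    (hTcov _ (mem_image_of_mem _ hm)).imp fun q hq => ⟨hq.1, hq.2 (hij m hm).1⟩
  have hT : ∀ q ∈ T, q.1 ≤ q.2 ∧ lam ≤ eavg a (Icc q.1 q.2) := by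
    intro q hq
    obtain ⟨m, hm, rfl⟩ := mem_image.mp (hTS hq)
    exact ⟨hle m hm, (hij m hm).2.le⟩
  calc lam * ∑ m ∈ F, ENNReal.ofReal |w m|
      ≤ lam * ∑ q ∈ T, ∑ m ∈ fiveFoldIcc q.1 q.2, ENNReal.ofReal |w m| := by
        gcongr
        refine (sum_le_sum_of_subset fun m hm => ?_).trans (sum_biUnion_le_sum_sum _ _ _)
        obtain ⟨q, hq, hmq⟩ := hcover m hm
        exact mem_biUnion.mpr ⟨q, hq, hmq⟩
    _ = ∑ q ∈ T, lam * ∑ m ∈ fiveFoldIcc q.1 q.2, ENNReal.ofReal |w m| := mul_sum _ _ _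
    _ ≤ ∑ q ∈ T, 5 * ∑ n ∈ Icc q.1 q.2, ENNReal.ofReal |a n| * Mhl w n :=
        sum_le_sum fun q hq => mul_sum_le_of_le_eavg (Icc_subset_fiveFoldIcc (hT q hq).1)
          (by exact_mod_cast card_fiveFoldIcc_le q.1 q.2) (hT q hq).2
    _ = 5 * ∑ n ∈ T.biUnion (fun q => Icc q.1 q.2), ENNReal.ofReal |a n| * Mhl w n := by
        rw [← mul_sum, sum_biUnion hTdisj]
    _ ≤ 5 * ∑' n, ENNReal.ofReal |a n| * Mhl w n := by
        gcongr
        exact ENNReal.sum_le_tsum _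

/-- there is an absolute constant `C₁` such that for every weight
`w : ℤ → ℝ≥0` and every `a ∈ ℓ¹(ℤ)`, for all `λ > 0`,
`∑_{{m : Ma(m) > λ}} w(m) ≤ (C₁/λ) ∑_m |a m| · Mw(m)`. -/
theorem weak_one_one_with_Mw :
    ∃ C : ℝ≥0∞, C ≠ ∞ ∧ ∀ (w : ℤ → ℝ≥0) (a : ℤ → ℝ),
      Summable (fun n => |a n|) → ∀ lam : ℝ≥0∞, 0 < lam →
      (∑' m : {m : ℤ | lam < Mhl a m}, (w m : ℝ≥0∞)) ≤
        C / lam * ∑' m : ℤ, ENNReal.ofReal |a m| * Mhl (fun n => (w n : ℝ)) m := by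
  refine ⟨5, by norm_num, fun w a _ lam hlam => ?_⟩
  rcases eq_or_ne lam ∞ with rfl | hlam_top
  · simp
  rw [ENNReal.tsum_eq_iSup_sum, ← ENNReal.mul_div_right_comm]
  refine iSup_le fun F => (ENNReal.le_div_iff_mul_le (.inl hlam.ne') (.inl hlam_top)).mpr ?_
  have := mul_sum_le_of_forall_lt_Mhl (a := a) (lam := lam) (w := fun n => (w n : ℝ))
    (F := F.map (.subtype _)) (by simpa using fun m hm _ => hm)
  rw [mul_comm]
  simp only [sum_map, Function.Embedding.subtype_apply, NNReal.abs_eq,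
    ENNReal.ofReal_coe_nnreal] at this
  exact this
end

section
/- Let (X, B, μ) be a probability space, U an invertible measure-preserving transformation, and w an ergodic A₁ weight on X. Then for every f ∈ L¹_w(X) and λ > 0, ∫_{{x : M̃f(x) > λ}} w(x) dμ(x) ≤ (C/λ) ∫_X |f(x)| w(x) dμ(x), where M̃ is the maximal ergodic operator and C depends only on the ergodic A₁ constant of w. -/
open scoped ENNReal BigOperators
open MeasureTheory

/-- The maximal ergodic operator associated with an invertible transformation `U`. -/
noncomputable def MErg {X : Type*} (U : Equiv.Perm X) (f : X → ℝ) (x : X) : ℝ≥0∞ :=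
  ⨆ (J : ℕ) (_ : 1 ≤ J),
    (∑ k ∈ Finset.Icc (-(J : ℤ)) (J : ℤ), ENNReal.ofReal |f ((U ^ (-k)) x)|) /
      ((2 * J + 1 : ℕ) : ℝ≥0∞)

/-- The ergodic `A₁` condition with constant `C`. -/
def ErgodicA1 {X : Type*} [MeasurableSpace X] (μ : Measure X) (U : Equiv.Perm X)
    (w : X → ℝ) (C : ℝ) : Prop :=
  ∀ᵐ x ∂μ, ∀ N : ℕ, 1 ≤ N → ∀ m : ℤ, |m| ≤ (N : ℤ) →
    (∑ k ∈ Finset.Icc (-(N : ℤ)) (N : ℤ), w ((U ^ k) x)) / (2 * N + 1 : ℝ) ≤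
      C * w ((U ^ m) x)

open Finset

/-! Calderón transference. For a.e. `x` the orbit weight `j ↦ w (U^j x)` is an `A₁` weight on `ℤ`,
and on `ℤ` the weighted weak (1,1) bound for the centred maximal function holds with constant
`3C`: by the Vitali covering lemma the level set is covered by the tripled intervals of a
disjoint family of intervals on which the averages of `|f|` are large, and the `A₁` condition
bounds the weight of a tripled interval by `3C` times its length times the minimum of the weight
on the interval. Applying this along the orbit segment `0 ≤ n < L` to the maximal function
truncated at radius `J₀`, integrating in `x` and using that `U` preserves `μ` gives
`L λ w(E) ≤ (L + 2J₀) 3C ∫ |f| w` for `E` the level set of the truncated maximal function;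
let `L → ∞`, then `J₀ → ∞`. -/

theorem Int.exists_disjoint_Icc_subfamily_covering_enlargement (E : Finset ℤ) (r : ℤ → ℕ) :
    ∃ S ⊆ E, (S : Set ℤ).PairwiseDisjoint (fun s => Icc (s - r s) (s + r s)) ∧
      ∀ n ∈ E, ∃ s ∈ S, n ∈ Icc (s - 3 * r s) (s + 3 * r s) := by
  obtain ⟨u, huE, hdisj, hcover⟩ := Vitali.exists_disjoint_subfamily_covering_enlargement
    (fun s => (Icc (s - r s) (s + r s) : Set ℤ)) E (fun s => r s) 2 one_lt_two
    (fun _ _ => Nat.cast_nonneg _) (∑ s ∈ E, r s)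
    (fun s hs => by exact_mod_cast single_le_sum (fun _ _ => Nat.zero_le _) hs)
    (fun s _ => ⟨s, by simp⟩)
  obtain ⟨S, rfl⟩ := (E.finite_toSet.subset huE).exists_finset_coe
  refine ⟨S, by exact_mod_cast huE, fun a ha b hb hab => ?_, fun n hn => ?_⟩
  · exact Finset.disjoint_coe.1 (hdisj ha hb hab)
  · obtain ⟨s, hs, ⟨p, hpn, hps⟩, hrs⟩ := hcover n hn
    -- `n` is only a centre, so `|n - s| ≤ r n + r s ≤ 3 r s`.
    have hrs : r n ≤ 2 * r s := by exact_mod_cast hrs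
    simp only [coe_Icc, Set.mem_Icc, mem_Icc] at hpn hps ⊢
    exact ⟨s, hs, by omega, by omega⟩

def IsDiscreteA1 (c : ℝ≥0∞) (v : ℤ → ℝ≥0∞) : Prop :=
  ∀ (n : ℤ) (N : ℕ), 1 ≤ N → ∀ m ∈ Icc (n - N) (n + N),
    ∑ k ∈ Icc (n - N) (n + N), v k ≤ c * (2 * N + 1) * v m

namespace IsDiscreteA1

variable {c lam : ℝ≥0∞} {v φ : ℤ → ℝ≥0∞}

theorem mul_sum_Icc_three_mul_le (hv : IsDiscreteA1 c v) {s : ℤ} {r : ℕ} (hr : 1 ≤ r)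
    (hlam : lam * (2 * r + 1) < ∑ j ∈ Icc (s - r) (s + r), φ j) :
    lam * ∑ n ∈ Icc (s - 3 * r) (s + 3 * r), v n ≤
      3 * c * ∑ j ∈ Icc (s - r) (s + r), φ j * v j := by
  obtain ⟨m, hm, hm_min⟩ := exists_min_image (Icc (s - r) (s + r)) v ⟨s, by simp⟩
  have hA1 := hv s (3 * r) (by omega) m (by simp only [mem_Icc] at hm ⊢; push_cast; omega)
  push_cast at hA1
  calc lam * ∑ n ∈ Icc (s - 3 * r) (s + 3 * r), v n
      ≤ lam * (c * (2 * (3 * r) + 1) * v m) := by gcongr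
    _ ≤ lam * (c * (3 * (2 * r + 1)) * v m) := by
        gcongr
        exact_mod_cast (by omega : 2 * (3 * r) + 1 ≤ 3 * (2 * r + 1))
    _ = 3 * c * (lam * (2 * r + 1) * v m) := by ring
    _ ≤ 3 * c * ((∑ j ∈ Icc (s - r) (s + r), φ j) * v m) := by gcongr
    _ ≤ 3 * c * ∑ j ∈ Icc (s - r) (s + r), φ j * v j := by
        rw [sum_mul]; gcongr with j hj; exact hm_min j hj

theorem mul_sum_le_of_forall_lt_sum_Icc (hv : IsDiscreteA1 c v) {E T : Finset ℤ}
    (hE : ∀ n ∈ E, ∃ r : ℕ, 1 ≤ r ∧ Icc (n - r) (n + r) ⊆ T ∧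
      lam * (2 * r + 1) < ∑ j ∈ Icc (n - r) (n + r), φ j) :
    lam * ∑ n ∈ E, v n ≤ 3 * c * ∑ j ∈ T, φ j * v j := by
  classical
  choose! r hr_pos hrT hr_lam using hE
  obtain ⟨S, hSE, hdisj, hcover⟩ := Int.exists_disjoint_Icc_subfamily_covering_enlargement E r
  choose! σ hσS hσ using hcover
  calc lam * ∑ n ∈ E, v n
      = lam * ∑ s ∈ S, ∑ n ∈ E with σ n = s, v n := by rw [sum_fiberwise_of_maps_to hσS]
    _ ≤ lam * ∑ s ∈ S, ∑ n ∈ Icc (s - 3 * r s) (s + 3 * r s), v n := by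
        gcongr with s
        intro n hn
        obtain ⟨hnE, rfl⟩ := mem_filter.1 hn
        exact hσ n hnE
    _ = ∑ s ∈ S, lam * ∑ n ∈ Icc (s - 3 * r s) (s + 3 * r s), v n := mul_sum ..
    _ ≤ ∑ s ∈ S, 3 * c * ∑ j ∈ Icc (s - r s) (s + r s), φ j * v j :=
        sum_le_sum fun s hs => hv.mul_sum_Icc_three_mul_le (hr_pos s (hSE hs)) (hr_lam s (hSE hs))
    _ = 3 * c * ∑ j ∈ S.biUnion fun s => Icc (s - r s) (s + r s), φ j * v j := by
        rw [sum_biUnion hdisj, mul_sum]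
    _ ≤ 3 * c * ∑ j ∈ T, φ j * v j := by
        gcongr
        exact biUnion_subset.2 fun s hs => hrT s (hSE hs)
end IsDiscreteA1

theorem ENNReal.le_of_forall_natCast_mul_le_add {a b c : ℝ≥0∞} (hb : b ≠ ∞) (hc : c ≠ ∞)
    (h : ∀ n : ℕ, n * a ≤ n * b + c) : a ≤ b := by
  by_contra! hba
  obtain ⟨n, hn⟩ := ENNReal.exists_nat_mul_gt (tsub_pos_of_lt hba).ne' hc
  refine (h n).not_gt ?_
  calc n * b + c < n * b + n * (a - b) :=
        ENNReal.add_lt_add_left (ENNReal.mul_ne_top (ENNReal.natCast_ne_top n) hb) hn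
    _ = n * a := by rw [← mul_add, add_tsub_cancel_of_le hba.le]

theorem Int.sum_Icc_add_eq {M : Type*} [AddCommMonoid M] (g : ℤ → M) (n : ℤ) (N : ℕ) :
    ∑ k ∈ Icc (-(N : ℤ)) N, g (n + k) = ∑ j ∈ Icc (n - N) (n + N), g j :=
  sum_nbij' (n + ·) (· - n) (fun k hk => by simp only [mem_Icc] at hk ⊢; omega)
    (fun j hj => by simp only [mem_Icc] at hj ⊢; omega) (fun _ _ => by ring) (fun _ _ => by ring)
    (fun _ _ => rfl)

theorem Int.sum_Icc_sub_eq {M : Type*} [AddCommMonoid M] (g : ℤ → M) (n : ℤ) (N : ℕ) :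
    ∑ k ∈ Icc (-(N : ℤ)) N, g (n - k) = ∑ j ∈ Icc (n - N) (n + N), g j :=
  sum_nbij' (n - ·) (n - ·) (fun k hk => by simp only [mem_Icc] at hk ⊢; omega)
    (fun j hj => by simp only [mem_Icc] at hj ⊢; omega) (fun _ _ => by ring) (fun _ _ => by ring)
    (fun _ _ => rfl)

section Transference

variable {X : Type*} {U : Equiv.Perm X}

noncomputable def ergodicAvg (U : Equiv.Perm X) (f : X → ℝ) (J : ℕ) (x : X) : ℝ≥0∞ :=
  (∑ k ∈ Icc (-(J : ℤ)) J, ENNReal.ofReal |f ((U ^ (-k)) x)|) / ((2 * J + 1 : ℕ) : ℝ≥0∞)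

noncomputable def truncMErg (U : Equiv.Perm X) (f : X → ℝ) (J₀ : ℕ) (x : X) : ℝ≥0∞ :=
  ⨆ J ∈ Icc 1 J₀, ergodicAvg U f J x

theorem ergodicAvg_zpow_apply (f : X → ℝ) (J : ℕ) (n : ℤ) (x : X) :
    ergodicAvg U f J ((U ^ n) x) =
      (∑ j ∈ Icc (n - J) (n + J), ENNReal.ofReal |f ((U ^ j) x)|) / ((2 * J + 1 : ℕ) : ℝ≥0∞) := by
  simp only [ergodicAvg, ← Equiv.Perm.mul_apply, ← zpow_add, neg_add_eq_sub,
    Int.sum_Icc_sub_eq fun j => ENNReal.ofReal |f ((U ^ j) x)|]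

theorem setOf_lt_MErg_eq_iUnion (f : X → ℝ) (lam : ℝ≥0∞) :
    {x | lam < MErg U f x} = ⋃ J₀, {x | lam < truncMErg U f J₀ x} := by
  ext x
  simp only [MErg, truncMErg, ergodicAvg, Set.mem_ofPred_eq, Set.mem_iUnion, lt_iSup_iff, mem_Icc]
  exact ⟨fun ⟨J, hJ, h⟩ => ⟨J, J, ⟨hJ, le_rfl⟩, h⟩, fun ⟨_, J, hJ, h⟩ => ⟨J, hJ.1, h⟩⟩

theorem monotone_setOf_lt_truncMErg (f : X → ℝ) (lam : ℝ≥0∞) :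
    Monotone fun J₀ => {x | lam < truncMErg U f J₀ x} :=
  fun _ _ hJ _ (hx : lam < _) => hx.trans_le <|
    biSup_mono fun _ hJ' => mem_Icc.2 ⟨(mem_Icc.1 hJ').1, (mem_Icc.1 hJ').2.trans hJ⟩

theorem mul_sum_indicator_truncMErg_le {f : X → ℝ} {v : X → ℝ≥0∞} {c : ℝ≥0∞} {x : X}
    (hx : IsDiscreteA1 c fun j => v ((U ^ j) x)) (lam : ℝ≥0∞) (J₀ L : ℕ) :
    lam * ∑ n ∈ Ico (0 : ℤ) L, {y | lam < truncMErg U f J₀ y}.indicator v ((U ^ n) x) ≤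
      3 * c * ∑ j ∈ Ico (-(J₀ : ℤ)) (L + J₀), ENNReal.ofReal |f ((U ^ j) x)| * v ((U ^ j) x) := by
  classical
  simp only [Set.indicator_apply, Set.mem_ofPred_eq]
  rw [← sum_filter]
  refine hx.mul_sum_le_of_forall_lt_sum_Icc fun n hn => ?_
  obtain ⟨hnL, hn⟩ := mem_filter.1 hn
  simp only [truncMErg, lt_iSup_iff, mem_Icc] at hn
  obtain ⟨J, ⟨hJ₁, hJ₀⟩, hlt⟩ := hn
  rw [ergodicAvg_zpow_apply, ENNReal.lt_div_iff_mul_lt (.inl (Nat.cast_ne_zero.2 (by omega)))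
    (.inl (ENNReal.natCast_ne_top _))] at hlt
  refine ⟨J, hJ₁, fun j hj => ?_, by exact_mod_cast hlt⟩
  simp only [mem_Icc, mem_Ico] at hj hnL ⊢
  omega

variable [MeasurableSpace X] {μ : Measure X}

theorem MeasureTheory.MeasurePreserving.perm_zpow (hU : MeasurePreserving U μ μ)
    (hUs : MeasurePreserving U.symm μ μ) : ∀ n : ℤ, MeasurePreserving ⇑(U ^ n) μ μ
  | .ofNat k => by
    rw [Int.ofNat_eq_natCast, zpow_natCast, Equiv.Perm.coe_pow]
    exact hU.iterate k
  | .negSucc k => by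
    rw [zpow_negSucc, ← inv_pow, Equiv.Perm.coe_pow]
    exact hUs.iterate (k + 1)

theorem lintegral_sum_comp_perm_zpow (hU : MeasurePreserving U μ μ)
    (hUs : MeasurePreserving U.symm μ μ) {g : X → ℝ≥0∞} (hg : AEMeasurable g μ) (s : Finset ℤ) :
    ∫⁻ x, ∑ n ∈ s, g ((U ^ n) x) ∂μ = #s * ∫⁻ x, g x ∂μ := by
  have hUn := hU.perm_zpow hUs
  rw [lintegral_finsetSum' s (f := fun n x => g ((U ^ n) x))
    fun n _ => hg.comp_quasiMeasurePreserving (hUn n).quasiMeasurePreserving]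
  have hcomp (n : ℤ) : ∫⁻ x, g ((U ^ n) x) ∂μ = ∫⁻ x, g x ∂μ := by
    have hg' : AEMeasurable g (μ.map ⇑(U ^ n)) := by rwa [(hUn n).map_eq]
    rw [← lintegral_map' hg' (hUn n).measurable.aemeasurable, (hUn n).map_eq]
  simp only [hcomp, sum_const, nsmul_eq_mul]

theorem ErgodicA1.ae_isDiscreteA1 {w : X → ℝ} {C : ℝ} (hA1 : ErgodicA1 μ U w C)
    (hU : MeasurePreserving U μ μ) (hUs : MeasurePreserving U.symm μ μ) (hw : ∀ x, 0 ≤ w x) :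
    ∀ᵐ x ∂μ, IsDiscreteA1 (ENNReal.ofReal C) fun j => ENNReal.ofReal (w ((U ^ j) x)) := by
  have hshift (n : ℤ) := (hU.perm_zpow hUs n).quasiMeasurePreserving.ae hA1
  filter_upwards [ae_all_iff.2 hshift] with x hx n N hN m hm
  have hm' : |m - n| ≤ N := by simp only [mem_Icc] at hm; rw [abs_le]; omega
  have hN' : (0 : ℝ) < 2 * N + 1 := by positivity
  have hreal : ∑ k ∈ Icc (-(N : ℤ)) N, w ((U ^ (n + k)) x) ≤ C * ((2 * N + 1) * w ((U ^ m) x)) := by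
    have h := hx n N hN (m - n) hm'
    simp only [← Equiv.Perm.mul_apply, ← zpow_add, sub_add_cancel, div_le_iff₀ hN'] at h
    simp only [add_comm n]
    linarith
  rw [← ENNReal.ofReal_sum_of_nonneg fun _ _ => hw _, ← Int.sum_Icc_add_eq]
  calc ENNReal.ofReal (∑ k ∈ Icc (-(N : ℤ)) N, w ((U ^ (n + k)) x))
      ≤ ENNReal.ofReal (C * ((2 * N + 1) * w ((U ^ m) x))) := ENNReal.ofReal_le_ofReal hreal
    _ = ENNReal.ofReal C * (2 * N + 1) * ENNReal.ofReal (w ((U ^ m) x)) := by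
        rw [ENNReal.ofReal_mul' (mul_nonneg hN'.le (hw _)), ENNReal.ofReal_mul (by positivity),
          mul_assoc]
        norm_cast

theorem measurable_truncMErg (hU : MeasurePreserving U μ μ) (hUs : MeasurePreserving U.symm μ μ)
    {f : X → ℝ} (hf : Measurable f) (J₀ : ℕ) : Measurable (truncMErg U f J₀) :=
  Measurable.iSup fun _ => Measurable.iSup fun _ => Measurable.div_const
    (Finset.measurable_sum _ fun k _ =>
      (hf.comp (hU.perm_zpow hUs (-k)).measurable).abs.ennreal_ofReal) _

theorem mul_setLIntegral_truncMErg_le (hU : MeasurePreserving U μ μ)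
    (hUs : MeasurePreserving U.symm μ μ) {f : X → ℝ} (hf : Measurable f) {v : X → ℝ≥0∞}
    (hv : AEMeasurable v μ) {c : ℝ≥0∞} (hc : c ≠ ∞)
    (hA1 : ∀ᵐ x ∂μ, IsDiscreteA1 c fun j => v ((U ^ j) x))
    (hI : ∫⁻ x, ENNReal.ofReal |f x| * v x ∂μ ≠ ∞) (lam : ℝ≥0∞) (J₀ : ℕ) :
    lam * ∫⁻ x in {x | lam < truncMErg U f J₀ x}, v x ∂μ ≤
      3 * c * ∫⁻ x, ENNReal.ofReal |f x| * v x ∂μ := by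
  set s := {x | lam < truncMErg U f J₀ x}
  set I := ∫⁻ x, ENNReal.ofReal |f x| * v x ∂μ
  have hs : MeasurableSet s := measurableSet_lt measurable_const (measurable_truncMErg hU hUs hf J₀)
  have hfv : AEMeasurable (fun x => ENNReal.ofReal |f x| * v x) μ :=
    hf.abs.ennreal_ofReal.aemeasurable.mul hv
  refine ENNReal.le_of_forall_natCast_mul_le_add (by finiteness) (c := 2 * J₀ * (3 * c * I))
    (by finiteness) fun L => ?_
  calc (L : ℝ≥0∞) * (lam * ∫⁻ x in s, v x ∂μ)
      = lam * ∫⁻ x, ∑ n ∈ Ico (0 : ℤ) L, s.indicator v ((U ^ n) x) ∂μ := by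
        rw [lintegral_sum_comp_perm_zpow hU hUs (hv.indicator hs), lintegral_indicator hs,
          Int.card_Ico, sub_zero, Int.toNat_natCast, mul_left_comm]
    _ ≤ ∫⁻ x, lam * ∑ n ∈ Ico (0 : ℤ) L, s.indicator v ((U ^ n) x) ∂μ :=
        lintegral_const_mul_le _ _
    _ ≤ ∫⁻ x, 3 * c * ∑ j ∈ Ico (-(J₀ : ℤ)) (L + J₀),
          ENNReal.ofReal |f ((U ^ j) x)| * v ((U ^ j) x) ∂μ :=
        lintegral_mono_ae (hA1.mono fun x hx => mul_sum_indicator_truncMErg_le hx lam J₀ L)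
    _ = L * (3 * c * I) + 2 * J₀ * (3 * c * I) := by
        rw [lintegral_const_mul' _ _ (by finiteness), lintegral_sum_comp_perm_zpow hU hUs hfv,
          Int.card_Ico, show (L + J₀ - -J₀ : ℤ) = (L + 2 * J₀ : ℕ) by push_cast; ring,
          Int.toNat_natCast]
        push_cast
        ring

end Transference

/-- for an ergodic `A₁` weight, the maximal ergodic operator satisfies
the weighted weak (1,1) inequality, with constant depending only on the `A₁` constant. -/
theorem maximal_ergodic_weak_one_one (C : ℝ) :
    ∃ C' : ℝ≥0∞, C' ≠ ∞ ∧
      ∀ (X : Type) (mX : MeasurableSpace X) (μ : Measure X),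
        IsProbabilityMeasure μ →
        ∀ U : Equiv.Perm X, MeasurePreserving U μ μ → MeasurePreserving U.symm μ μ →
        ∀ w : X → ℝ, (∀ x, 0 ≤ w x) → Integrable w μ → ErgodicA1 μ U w C →
        ∀ f : X → ℝ, Measurable f →
          (∫⁻ x, ENNReal.ofReal |f x| * ENNReal.ofReal (w x) ∂μ) ≠ ∞ →
          ∀ lam : ℝ≥0∞, 0 < lam →
            (∫⁻ x in {x | lam < MErg U f x}, ENNReal.ofReal (w x) ∂μ) ≤
              C' / lam * ∫⁻ x, ENNReal.ofReal |f x| * ENNReal.ofReal (w x) ∂μ := by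
  refine ⟨3 * ENNReal.ofReal C, by finiteness, ?_⟩
  intro X _ μ _ U hU hUs w hw hwi hA1 f hf hI lam hlam
  have hv : AEMeasurable (fun x => ENNReal.ofReal (w x)) μ := hwi.aemeasurable.ennreal_ofReal
  rw [← withDensity_apply', setOf_lt_MErg_eq_iUnion,
    (monotone_setOf_lt_truncMErg f lam).measure_iUnion]
  refine iSup_le fun J₀ => ?_
  rw [withDensity_apply', ← ENNReal.mul_div_right_comm,
    ENNReal.le_div_iff_mul_le (.inl hlam.ne') (.inr (by finiteness)), mul_comm]
  exact mul_setLIntegral_truncMErg_le hU hUs hf hv ENNReal.ofReal_ne_top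
    (hA1.ae_isDiscreteA1 hU hUs hw) hI lam J₀
end
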